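/- The SAℓCA of a deterministic transition system need not be deterministic; concretely, there exists a deterministic transition system S with two outputs and an ℓ ≥ 2 such that some state of S_ℓ has two distinct successor states under the domino rule. -/

import Mathlib

/-- A transition system `(X, X0, E, Y, H)`. -/
structure TS (X Y : Type*) where
  init : Set X
  edge : X → X → Prop
  out : X → Y

/-- The set of `H`-long output behaviors of a transition system. -/
def BehH {X Y : Type*} (S : TS X Y) (H : ℕ) : Set (List Y) :=
  {b | ∃ r : ℕ → X, r 0 ∈ S.init ∧ (∀ k, k + 1 < H → S.edge (r k) (r (k + 1))) ∧
        b = (List.range H).map fun k => S.out (r k)}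

/-- The set of `ℓ`-long contiguous subsequences of a set of behaviors. -/
def Xell {Y : Type*} (B : Set (List Y)) (ℓ : ℕ) : Set (List Y) :=
  {σ | σ.length = ℓ ∧ ∃ b ∈ B, σ <:+: b}

/-- The (strongest asynchronous) `ℓ`-complete abstraction built from a behavior set `B`
with initial-output set `Y0`: states are `ℓ`-long subsequences, transitions follow the
domino rule, the output is the first symbol. -/
def AbsTS {Y : Type*} [Inhabited Y] (B : Set (List Y)) (Y0 : Set Y) (ℓ : ℕ) :
    TS (List Y) Y where
  init := {σ | σ ∈ Xell B ℓ ∧ ∃ y ∈ Y0, σ.head? = some y}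
  edge := fun σ σ' => σ ∈ Xell B ℓ ∧ σ' ∈ Xell B ℓ ∧ σ.tail = σ'.dropLast
  out := fun σ => σ.headI

/-- The SAℓCA of a transition system `S` for horizon `H`. -/
def SAlCA {X Y : Type*} [Inhabited Y] (S : TS X Y) (H ℓ : ℕ) : TS (List Y) Y :=
  AbsTS (BehH S H) (S.out '' S.init) ℓ

/-- `H`-long behaviors of the abstraction built from behavior set `B`: a run of
`H - ℓ + 1` abstract states (windows) flattened into `H` output symbols (the heads of
the windows followed by the tail of the last window). -/
def AbsBeh {Y : Type*} [Inhabited Y] (B : Set (List Y)) (Y0 : Set Y) (H ℓ : ℕ) :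
    Set (List Y) :=
  {b | ∃ r : ℕ → List Y, r 0 ∈ (AbsTS B Y0 ℓ).init ∧
        (∀ k, k + 1 ≤ H - ℓ → (AbsTS B Y0 ℓ).edge (r k) (r (k + 1))) ∧
        b = ((List.range (H - ℓ + 1)).map fun k => (r k).headI) ++ (r (H - ℓ)).tail}

/-- `H`-long behaviors of the SAℓCA of `S`. -/
def AbsBehH {X Y : Type*} [Inhabited Y] (S : TS X Y) (H ℓ : ℕ) : Set (List Y) :=
  AbsBeh (BehH S H) (S.out '' S.init) H ℓ

/-- Two-symbol output alphabet. -/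
inductive BSym | y0 | y1
deriving DecidableEq, Inhabited

/-- Output map: `y0` on `(1/4, 1]`, `y1` on `[0, 1/4]`. -/
noncomputable def outS (x : ℝ) : BSym := if 1 / 4 < x then .y0 else .y1

/-- The example system `x ↦ x/2` on `[0,1]`, every state initial. -/
noncomputable def halfTS : TS ℝ BSym where
  init := Set.Icc 0 1
  edge := fun x x' => x' = x / 2
  out := outS

theorem TS.pair_mem_behH {X Y : Type*} (S : TS X Y) {x x' : X} (hx : x ∈ S.init)
    (hxx' : S.edge x x') : [S.out x, S.out x'] ∈ BehH S 2 := by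
  refine ⟨fun k => if k = 0 then x else x', hx, ?_, by simp [List.range_succ]⟩
  intro k hk
  obtain rfl : k = 0 := by omega
  simpa using hxx'

theorem mem_xell_length {Y : Type*} {B : Set (List Y)} {b : List Y} (hb : b ∈ B) :
    b ∈ Xell B b.length :=
  ⟨rfl, b, hb, List.infix_refl b⟩

theorem halfTS_pair_mem_behH {x : ℝ} (hx : x ∈ Set.Icc 0 1) :
    [outS x, outS (x / 2)] ∈ BehH halfTS 2 :=
  halfTS.pair_mem_behH hx rfl

theorem halfTS_y0_y0_mem_xell : [BSym.y0, .y0] ∈ Xell (BehH halfTS 2) 2 := by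
  have h := halfTS_pair_mem_behH (x := 1) (by norm_num)
  norm_num [outS] at h
  exact mem_xell_length h

theorem halfTS_y0_y1_mem_xell : [BSym.y0, .y1] ∈ Xell (BehH halfTS 2) 2 := by
  have h := halfTS_pair_mem_behH (x := 2 / 5) (by norm_num)
  norm_num [outS] at h
  exact mem_xell_length h

/-- the SAℓCA of a deterministic transition system need not be
deterministic: some deterministic `S` with two outputs has an abstract state with two
distinct successors under the domino rule. -/
theorem stmt8 : ∃ (X : Type) (S : TS X BSym) (H ℓ : ℕ), 2 ≤ ℓ ∧ ℓ ≤ H ∧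
    (∀ x x' x'' : X, S.edge x x' → S.edge x x'' → x' = x'') ∧
    ∃ σ σ' σ'' : List BSym, σ' ≠ σ'' ∧
      (SAlCA S H ℓ).edge σ σ' ∧ (SAlCA S H ℓ).edge σ σ'' := by
  -- Runs from 1 and from 2/5 both start in y0 but read y0 y0 and y0 y1, so a window y0 y0
  -- (seen from 1) has both windows as domino successors.
  refine ⟨ℝ, halfTS, 2, 2, le_rfl, le_rfl, fun x x' x'' h' h'' => h'.trans h''.symm,
    [.y0, .y0], [.y0, .y0], [.y0, .y1], by simp, ?_, ?_⟩
  · exact ⟨halfTS_y0_y0_mem_xell, halfTS_y0_y0_mem_xell, rfl⟩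
  · exact ⟨halfTS_y0_y0_mem_xell, halfTS_y0_y1_mem_xell, rfl⟩
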